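/- arXiv:1610.07874 — 2 statements merged into one kernel-verified Lean document; each statement's English description precedes it below -/
import Mathlib

section
/- Let G be a finite connected graph, T a finite tree, and 𝒞⊂V(T)×V(G) a correspondence with stretch at most r, and for t∈V(T) let A_t = B_G(r(r+1), 𝒞_{t,G}). Then for any s,t∈V(T), if d_T(s,t) ≥ 2r²(r+1)+r then A_s ∩ A_t = ∅. -/
open Finset

noncomputable section

/-- A finite Markov chain together with its (positive) stationary distribution. -/
structure MarkovChain (V : Type) [Fintype V] [DecidableEq V] where
  P : V → V → ℝ
  P_nonneg : ∀ u v, 0 ≤ P u v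
  P_rowsum : ∀ u, ∑ v, P u v = 1
  pi : V → ℝ
  pi_pos : ∀ v, 0 < pi v
  pi_sum : ∑ v, pi v = 1
  pi_stat : ∀ v, ∑ u, pi u * P u v = pi v

/-- A set of vertices `A` is connected (in `G`) if any two of its vertices are joined
by a walk all of whose vertices lie in `A` (vacuously true for `∅`). -/
def ConnIn {V : Type} (G : SimpleGraph V) (A : Set V) : Prop :=
  ∀ u ∈ A, ∀ v ∈ A, ∃ p : G.Walk u v, ∀ x ∈ p.support, x ∈ A

/-- Every vertex of `G` has degree at most `Δ`. -/
def DegLE {V : Type} (G : SimpleGraph V) (Δ : ℕ) : Prop :=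
  ∀ v, {u | G.Adj v u}.ncard ≤ Δ

/-- `𝒞` is a correspondence between `G` and `H` of stretch at most `r`. -/
def CorrespondenceStretchLE {V W : Type} (G : SimpleGraph V) (H : SimpleGraph W)
    (r : ℝ) (𝒞 : Set (V × W)) : Prop :=
  (∀ v, ∃ w, (v, w) ∈ 𝒞) ∧ (∀ w, ∃ v, (v, w) ∈ 𝒞) ∧
    ∀ p ∈ 𝒞, ∀ q ∈ 𝒞,
      (max (G.dist p.1 q.1) (H.dist p.2 q.2) : ℝ) + 1 ≤
        r * ((min (G.dist p.1 q.1) (H.dist p.2 q.2) : ℝ) + 1)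

/-- `G` and `H` are `r`-roughly isometric. -/
def RoughIsom {V W : Type} (G : SimpleGraph V) (H : SimpleGraph W) (r : ℝ) : Prop :=
  ∃ 𝒞 : Set (V × W), CorrespondenceStretchLE G H r 𝒞

namespace MarkovChain

variable {V : Type} [Fintype V] [DecidableEq V] (M : MarkovChain V)

/-- `n`-step transition probabilities. -/
def stepDist : ℕ → V → V → ℝ
  | 0, u, v => if u = v then 1 else 0
  | n + 1, u, v => ∑ w, stepDist n u w * M.P w v

def Irreducible : Prop := ∀ u v, ∃ n, 0 < M.stepDist n u v

def Lazy : Prop := ∀ v, M.P v v = 1 / 2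

def Reversible : Prop := ∀ u v, M.pi u * M.P u v = M.pi v * M.P v u

/-- The graph associated to the chain: `u ∼ v` iff `u ≠ v` and `p uv > 0` or `p vu > 0`. -/
def graph : SimpleGraph V where
  Adj u v := u ≠ v ∧ (0 < M.P u v ∨ 0 < M.P v u)
  symm := ⟨fun u v h => ⟨h.1.symm, h.2.symm⟩⟩
  loopless := ⟨fun v h => h.1 rfl⟩

/-- The chain is `ε`-uniform. -/
def Uniform (ε : ℝ) : Prop :=
  ∀ u v x y, M.graph.Adj u v → M.graph.Adj x y →
    ε * (M.pi x * M.P x y) ≤ M.pi u * M.P u v ∧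
      M.pi u * M.P u v ≤ (M.pi x * M.P x y) / ε

/-- `Q A B = P_π(X₀ ∈ A, X₁ ∈ B)`. -/
def Q (A B : Finset V) : ℝ := ∑ u ∈ A, ∑ v ∈ B, M.pi u * M.P u v

/-- `π(A)`. -/
def piSet (A : Finset V) : ℝ := ∑ v ∈ A, M.pi v

/-- `Φ(A) = Q(A,Aᶜ)/(π(A)π(Aᶜ))`. -/
def Phi (A : Finset V) : ℝ := M.Q A Aᶜ / (M.piSet A * M.piSet Aᶜ)

/-- A subset of the state space is connected if it induces a connected subgraph. -/
def Conn (A : Finset V) : Prop := ConnIn M.graph (A : Set V)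

/-- A `θ`-bottleneck sequence `S 1 ⊆ ⋯ ⊆ S l`. -/
def IsBottleneckSeq (θ : ℝ) (l : ℕ) (S : ℕ → Finset V) : Prop :=
  1 ≤ l ∧ (S 1).Nonempty ∧ S l ≠ Finset.univ ∧
    (∀ j, 1 ≤ j → j < l → S j ⊆ S (j + 1)) ∧
    (∀ j, 1 ≤ j → j ≤ l → M.Conn (S j) ∧ M.Conn (S j)ᶜ) ∧
    (∀ j, 1 ≤ j → j < l → θ * M.Q (S j)ᶜ (S j) ≤ M.Q (S (j + 1) \ S j) (S j))

/-- The maximum, over `θ`-bottleneck sequences, of `∑ j, 1/Φ(S j)`. -/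
def maxBotSum (θ : ℝ) : ℝ :=
  sSup {x | ∃ (l : ℕ) (S : ℕ → Finset V),
    M.IsBottleneckSeq θ l S ∧ x = ∑ j ∈ Finset.Icc 1 l, 1 / M.Phi (S j)}

/-- The maximum, over `1`-bottleneck sequences, of `∑ j, |S j| * |(S j)ᶜ|`. -/
def maxBotCardProd : ℝ :=
  sSup {x | ∃ (l : ℕ) (S : ℕ → Finset V),
    M.IsBottleneckSeq 1 l S ∧
      x = ∑ j ∈ Finset.Icc 1 l, ((S j).card : ℝ) * ((S j)ᶜ.card : ℝ)}

/-- Total variation distance between the time-`n` distribution of the chain started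
at `v`, and the stationary distribution. -/
def tvDist (n : ℕ) (v : V) : ℝ :=
  ⨆ A : Finset V, |∑ u ∈ A, (M.stepDist n v u - M.pi u)|

/-- The total variation mixing time. -/
def tMix : ℕ := sInf {n : ℕ | ∀ v, M.tvDist n v ≤ 1 / 4}

/-- Exit frequencies `x v = E_s[#{k < τ : X_k = v}]` of a stopping rule `τ` from `s`
to `π`.  (By a theorem of Lovász and Winkler, a vector arises this way from some
stopping rule from `s` to `π` iff it is nonnegative and satisfies the balance
equations below; moreover `E_s[τ] = ∑ v, x v`.) -/
def IsExitMeasure (s : V) (x : V → ℝ) : Prop :=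
  (∀ v, 0 ≤ x v) ∧
    ∀ v, (if v = s then (1 : ℝ) else 0) + ∑ u, x u * M.P u v = M.pi v + x v

/-- `inf E_s[τ]` over all stopping rules `τ` from `s` to `π`. -/
def stopTimeFrom (s : V) : ℝ :=
  sInf {E | ∃ x : V → ℝ, M.IsExitMeasure s x ∧ E = ∑ v, x v}

/-- `t_stop = max_s inf E_s[τ]`. -/
def tStop : ℝ := ⨆ s : V, M.stopTimeFrom s

/-- `avoidProb A n v = P_v(H(A) > n)`. -/
def avoidProb (A : Finset V) : ℕ → V → ℝ
  | 0, v => if v ∈ A then 0 else 1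
  | n + 1, v => if v ∈ A then 0 else ∑ w, M.P v w * avoidProb A n w

/-- `E_v[H(A)]`, the expected hitting time of `A` from `v`. -/
def expHit (v : V) (A : Finset V) : ℝ := ∑' n : ℕ, M.avoidProb A n v

/-- `E_v[H⁺(A)]`, where `H⁺(A) = min {n ≥ 1 : X_n ∈ A}`. -/
def expHitPlus (v : V) (A : Finset V) : ℝ :=
  1 + ∑ w, M.P v w * M.expHit w A

/-- `t_hit(δ) = max {E_v[H(A)] : v ∈ V, π(A) ≥ δ}`. -/
def tHit (δ : ℝ) : ℝ :=
  sSup {x | ∃ (v : V) (A : Finset V), δ ≤ M.piSet A ∧ x = M.expHit v A}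

/-- `hitProbLE n v u = P_v(H(u) ≤ n)`. -/
def hitProbLE : ℕ → V → V → ℝ
  | 0, v, u => if v = u then 1 else 0
  | n + 1, v, u => if v = u then 1 else ∑ w, M.P v w * hitProbLE n w u

/-- `v` is `α`-near to `u`: `π(v) P_v(H(u) ≤ 1/α) ≥ α π(u)`. -/
def Near (α : ℝ) (v u : V) : Prop :=
  α * M.pi u ≤ M.pi v * M.hitProbLE ⌊1 / α⌋₊ v u

/-- `A` is `α`-near to `B`: every vertex of `A` is `α`-near to some vertex of `B`. -/
def NearSet (α : ℝ) (A : Set V) (B : Finset V) : Prop :=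
  ∀ v ∈ A, ∃ u ∈ B, M.Near α v u

/-- The inner boundary `∂ⁱ A`. -/
def innerBoundary (A : Finset V) : Set V :=
  {v | v ∈ A ∧ ∃ u, u ∉ A ∧ 0 < M.P u v}

/-- `B` is a `β`-adjustment of `A`. -/
def Adjustment (β : ℝ) (A B : Finset V) : Prop :=
  ∀ S : Finset V, S ⊆ Bᶜ → M.Conn (A ∪ S) →
    β * M.Q (B ∪ S)ᶜ (B ∪ S) ≤ M.Q (B ∪ S)ᶜ (A ∪ S)

/-- A `γ`-valid move for Crawler, from `(C, D)` to `(C', D)`. -/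
def CrawlerMove (γ : ℝ) (C D C' : Finset V) : Prop :=
  C ⊆ C' ∧ C' \ C ⊆ Dᶜ ∧ M.Conn C' ∧ M.Q (D ∪ C')ᶜ C ≤ γ * M.Q Dᶜ C

/-- An `(s,α,β)`-valid move for Dasher, from `(C, D)` to `(C, D')`. -/
def DasherMove (s : V) (α β : ℝ) (C D D' : Finset V) : Prop :=
  D ∪ C ⊆ D' ∧ M.Conn D'ᶜ ∧ M.NearSet α (M.innerBoundary D') C ∧
    M.Adjustment β C D' ∧ (s ∈ D' → (∃ u ∈ C, M.Near α s u) ∧ D' = Finset.univ)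

/-- `((C i, D i), 0 ≤ i ≤ k)` is an `(s,α,β,γ)`-valid sequence. -/
def ValidSeq (s : V) (α β γ : ℝ) (k : ℕ) (C D : ℕ → Finset V) : Prop :=
  C 0 = ∅ ∧ D 0 = ∅ ∧
    ∀ i, i < k → M.CrawlerMove γ (C i) (D i) (C (i + 1)) ∧
      M.DasherMove s α β (C (i + 1)) (D i) (D (i + 1))

/-- `((C i, D i), 0 ≤ i ≤ l + 1)` is an `(s,α,β,γ)`-valid game. -/
def ValidGame (s : V) (α β γ : ℝ) (l : ℕ) (C D : ℕ → Finset V) : Prop :=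
  M.ValidSeq s α β γ (l + 1) C D ∧ D (l + 1) = Finset.univ

end MarkovChain


/-! Two centres `u₁ ∈ 𝒞_{s,G}` and `u₂ ∈ 𝒞_{t,G}` of intersecting balls are at distance at most
`2r(r+1)` in `G`, so the stretch bound gives `d_T(s,t) + 1 ≤ r(2r(r+1) + 1) = 2r²(r+1) + r`. -/

namespace CorrespondenceStretchLE

variable {V W : Type} {G : SimpleGraph V} {H : SimpleGraph W} {r : ℝ} {𝒞 : Set (V × W)}

theorem one_le (h𝒞 : CorrespondenceStretchLE G H r 𝒞) (v : V) : 1 ≤ r := by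
  obtain ⟨w, hw⟩ := h𝒞.1 v
  simpa using h𝒞.2.2 _ hw _ hw

theorem dist_fst_add_one_le (h𝒞 : CorrespondenceStretchLE G H r 𝒞) {p q : V × W}
    (hp : p ∈ 𝒞) (hq : q ∈ 𝒞) :
    (G.dist p.1 q.1 : ℝ) + 1 ≤ r * ((H.dist p.2 q.2 : ℝ) + 1) := by
  have hr : 0 ≤ r := zero_le_one.trans (h𝒞.one_le p.1)
  calc (G.dist p.1 q.1 : ℝ) + 1
      ≤ (max (G.dist p.1 q.1) (H.dist p.2 q.2) : ℝ) + 1 := by gcongr; exact le_max_left _ _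
    _ ≤ r * ((min (G.dist p.1 q.1) (H.dist p.2 q.2) : ℝ) + 1) := h𝒞.2.2 p hp q hq
    _ ≤ r * ((H.dist p.2 q.2 : ℝ) + 1) := by gcongr; exact min_le_right _ _

end CorrespondenceStretchLE

theorem correspondence_balls_disjoint_general (VG VT : Type)
    (G : SimpleGraph VG) (T : SimpleGraph VT) (hG : G.Connected)
    (r : ℝ) (𝒞 : Set (VT × VG)) (h𝒞 : CorrespondenceStretchLE T G r 𝒞)
    (s t : VT) (hd : 2 * r ^ 2 * (r + 1) + r ≤ (T.dist s t : ℝ)) :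
    {v : VG | ∃ u, (s, u) ∈ 𝒞 ∧ (G.dist v u : ℝ) ≤ r * (r + 1)} ∩
      {v : VG | ∃ u, (t, u) ∈ 𝒞 ∧ (G.dist v u : ℝ) ≤ r * (r + 1)} = ∅ := by
  refine Set.eq_empty_of_forall_notMem fun v ⟨⟨u₁, hu₁, hvu₁⟩, ⟨u₂, hu₂, hvu₂⟩⟩ => ?_
  have hr : 1 ≤ r := h𝒞.one_le s
  have hu : (G.dist u₁ u₂ : ℝ) ≤ 2 * (r * (r + 1)) := by
    have : G.dist u₁ u₂ ≤ G.dist v u₁ + G.dist v u₂ := by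
      simpa only [SimpleGraph.dist_comm] using hG.dist_triangle (u := u₁) (v := v) (w := u₂)
    have : (G.dist u₁ u₂ : ℝ) ≤ G.dist v u₁ + G.dist v u₂ := by exact_mod_cast this
    linarith
  have hst : (T.dist s t : ℝ) + 1 ≤ r * (2 * (r * (r + 1)) + 1) :=
    (h𝒞.dist_fst_add_one_le hu₁ hu₂).trans (mul_le_mul_of_nonneg_left (by linarith) (by linarith))
  linarith

/-- **Lemma 5.4.** Let `𝒞 ⊆ V(T) × V(G)` be a correspondence of stretch at most
`r` between a finite tree `T` and a finite connected graph `G`, and let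
`A_t = B_G(r(r+1), 𝒞_{t,G})`. If `d_T(s,t) ≥ 2r²(r+1) + r` then `A_s ∩ A_t = ∅`. -/
theorem correspondence_balls_disjoint (VG VT : Type) [Fintype VG] [Fintype VT]
    (G : SimpleGraph VG) (T : SimpleGraph VT) (hG : G.Connected) (hT : T.IsTree)
    (r : ℝ) (𝒞 : Set (VT × VG)) (h𝒞 : CorrespondenceStretchLE T G r 𝒞)
    (s t : VT) (hd : 2 * r ^ 2 * (r + 1) + r ≤ (T.dist s t : ℝ)) :
    {v : VG | ∃ u, (s, u) ∈ 𝒞 ∧ (G.dist v u : ℝ) ≤ r * (r + 1)} ∩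
      {v : VG | ∃ u, (t, u) ∈ 𝒞 ∧ (G.dist v u : ℝ) ≤ r * (r + 1)} = ∅ :=
  correspondence_balls_disjoint_general VG VT G T hG r 𝒞 h𝒞 s t hd
end
end

section
/- Fix a finite irreducible lazy Markov chain X on state space V, α,β∈(0,1], γ∈(0,1) and s∈V. Suppose ((C_i,D_i), 0 ≤ i ≤ k) is an (s,α,β,γ)-valid sequence in the bottleneck sequence game and D_k ≠ V. Then Crawler has at least one γ-valid move (C_{k+1},D_k) from position (C_k,D_k); moreover, from any such position (C_{k+1},D_k), Dasher has at least one (s,α,β)-valid move (C_{k+1},D_{k+1}). -/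
open Finset

noncomputable section

/-!
Every position of a valid play satisfies the invariants that Dasher's moves guarantee: `C` and
`Dᶜ` are connected, `∂ⁱD` is `α`-near to `C`, `D` is a `β`-adjustment of `C`, and `s ∉ D` unless
`D = V`; the start `(∅, ∅)` satisfies them by irreducibility. Crawler may always add to `C` every
vertex outside `D` that steps into `C`, which makes `Q((D ∪ C')ᶜ, C) = 0`. Dasher ends the game if
`s` is `α`-near to `C'`; otherwise he walls off the component `K` of `s` in `(D ∪ C')ᶜ`, taking
`D' = Kᶜ`. No edge leaves `K` inside `(D ∪ C')ᶜ`, so the vertices of `∂ⁱD'` lie in `C'` or in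
`∂ⁱD`, and the adjustment property of `D'` is that of `D` tested against a suitably enlarged set.
-/

namespace SimpleGraph

variable {V : Type} {G : SimpleGraph V}

lemma Walk.forall_mem_support_append {S : Set V} {u v w : V} {p : G.Walk u v} {q : G.Walk v w}
    (hp : ∀ y ∈ p.support, y ∈ S) (hq : ∀ y ∈ q.support, y ∈ S) :
    ∀ y ∈ (p.append q).support, y ∈ S := by
  intro y hy
  rcases (Walk.mem_support_append_iff p q).mp hy with hy | hy
  exacts [hp y hy, hq y hy]

lemma Walk.forall_mem_support_concat {S : Set V} {u v w : V} {p : G.Walk u v} (h : G.Adj v w)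
    (hp : ∀ y ∈ p.support, y ∈ S) (hw : w ∈ S) : ∀ y ∈ (p.concat h).support, y ∈ S := by
  simpa [Walk.support_concat, or_imp, forall_and] using ⟨hp, hw⟩

lemma Walk.forall_mem_support_reverse {S : Set V} {u v : V} {p : G.Walk u v}
    (hp : ∀ y ∈ p.support, y ∈ S) : ∀ y ∈ p.reverse.support, y ∈ S := by
  simpa only [Walk.support_reverse, List.mem_reverse] using hp

lemma Walk.exists_adj_exit {T : Set V} {a b : V} (p : G.Walk a b) (ha : a ∈ T) (hb : b ∉ T) :
    ∃ u c, u ∈ T ∧ c ∉ T ∧ c ∈ p.support ∧ G.Adj u c ∧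
      ∃ q : G.Walk a u, ∀ y ∈ q.support, y ∈ T := by
  induction p with
  | nil => exact absurd ha hb
  | @cons a a' b hadj p ih =>
    by_cases ha' : a' ∈ T
    · obtain ⟨u, c, hu, hc, hcp, huc, q, hq⟩ := ih ha' hb
      refine ⟨u, c, hu, hc, List.mem_cons_of_mem _ hcp, huc, .cons hadj q, ?_⟩
      simpa [Walk.support_cons, ha] using hq
    · exact ⟨a, a', ha, ha', by simp, hadj, .nil, by simpa using ha⟩

end SimpleGraph

section ConnIn

open SimpleGraph

variable {V : Type} {G : SimpleGraph V}

lemma connIn_of_forall_walk_to {A : Set V} (c : V)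
    (h : ∀ x ∈ A, ∃ p : G.Walk x c, ∀ y ∈ p.support, y ∈ A) : ConnIn G A := by
  intro u hu v hv
  obtain ⟨pu, hpu⟩ := h u hu
  obtain ⟨pv, hpv⟩ := h v hv
  exact ⟨pu.append pv.reverse,
    Walk.forall_mem_support_append hpu (Walk.forall_mem_support_reverse hpv)⟩

lemma ConnIn.union {A B : Set V} (hA : ConnIn G A)
    (hB : ∀ x ∈ B, ∃ c ∈ A, ∃ p : G.Walk x c, ∀ y ∈ p.support, y ∈ A ∪ B) :
    ConnIn G (A ∪ B) := by
  have toA : ∀ x ∈ A ∪ B, ∃ c ∈ A, ∃ p : G.Walk x c, ∀ y ∈ p.support, y ∈ A ∪ B := by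
    rintro x (hx | hx)
    · exact ⟨x, hx, .nil, by simpa using Or.inl hx⟩
    · exact hB x hx
  intro u hu
  obtain ⟨c, hc, -⟩ := toA u hu
  refine connIn_of_forall_walk_to c (fun x hx => ?_) u hu
  obtain ⟨c', hc', p, hp⟩ := toA x hx
  obtain ⟨q, hq⟩ := hA c' hc' c hc
  exact ⟨p.append q, Walk.forall_mem_support_append hp fun y hy => Or.inl (hq y hy)⟩

lemma ConnIn.exists_walk_to_of_closed {W K E : Set V} (hW : ConnIn G W) {s : V} (hsK : s ∈ K)
    (hsW : s ∈ W) (hK : ∀ u ∈ K, ∀ v, G.Adj u v → v ∈ W → v ∉ E → v ∈ K) :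
    ∀ t ∈ W \ (K ∪ E), ∃ c ∈ E, ∃ p : G.Walk t c, ∀ y ∈ p.support, y ∈ E ∪ W \ (K ∪ E) := by
  intro t ht
  obtain ⟨p, hp⟩ := hW t ht.1 s hsW
  obtain ⟨u, c, hu, hc, hcp, huc, q, hq⟩ :=
    p.exists_adj_exit ht (fun hs => hs.2 (Or.inl hsK))
  have hcK : c ∉ K := fun hcK => hu.2 (Or.inl (hK c hcK u huc.symm hu.1 fun h => hu.2 (Or.inr h)))
  have hcE : c ∈ E := by
    by_contra hcE
    exact hc ⟨hp c hcp, fun h => h.elim hcK hcE⟩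
  exact ⟨c, hcE, q.concat huc,
    Walk.forall_mem_support_concat huc (fun y hy => Or.inr (hq y hy)) (Or.inl hcE)⟩

end ConnIn

namespace SimpleGraph

variable {V : Type} [Fintype V]

open Classical in
def componentIn (G : SimpleGraph V) (A : Set V) (s : V) : Finset V :=
  univ.filter fun v => ∃ p : G.Walk s v, ∀ y ∈ p.support, y ∈ A

variable {G : SimpleGraph V} {A : Set V} {s : V}

lemma mem_componentIn {v : V} :
    v ∈ G.componentIn A s ↔ ∃ p : G.Walk s v, ∀ y ∈ p.support, y ∈ A := by
  simp [componentIn]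

lemma mem_of_mem_componentIn {v : V} (hv : v ∈ G.componentIn A s) : v ∈ A := by
  obtain ⟨p, hp⟩ := mem_componentIn.mp hv
  exact hp v p.end_mem_support

lemma mem_componentIn_self (hs : s ∈ A) : s ∈ G.componentIn A s :=
  mem_componentIn.mpr ⟨.nil, by simpa using hs⟩

lemma mem_componentIn_of_adj {u v : V} (hu : u ∈ G.componentIn A s) (huv : G.Adj u v)
    (hv : v ∈ A) : v ∈ G.componentIn A s := by
  obtain ⟨p, hp⟩ := mem_componentIn.mp hu
  exact mem_componentIn.mpr ⟨p.concat huv, Walk.forall_mem_support_concat huv hp hv⟩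

lemma connIn_componentIn [DecidableEq V] : ConnIn G (G.componentIn A s) := by
  refine connIn_of_forall_walk_to s fun x hx => ?_
  obtain ⟨p, hp⟩ := mem_componentIn.mp hx
  refine ⟨p.reverse, Walk.forall_mem_support_reverse fun y hy => ?_⟩
  exact mem_componentIn.mpr ⟨p.takeUntil y hy,
    fun z hz => hp z (p.support_takeUntil_subset_support hy hz)⟩

end SimpleGraph

namespace MarkovChain

variable {V : Type} [Fintype V] [DecidableEq V] (M : MarkovChain V)

lemma Q_nonneg (A B : Finset V) : 0 ≤ M.Q A B :=
  sum_nonneg fun u _ => sum_nonneg fun v _ => mul_nonneg (M.pi_pos u).le (M.P_nonneg u v)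

@[simp]
lemma Q_empty_left (B : Finset V) : M.Q ∅ B = 0 := by
  simp [Q]

lemma Q_union_right {A B₁ B₂ : Finset V} (h : Disjoint B₁ B₂) :
    M.Q A (B₁ ∪ B₂) = M.Q A B₁ + M.Q A B₂ := by
  simp only [Q, ← sum_add_distrib, sum_union h]

lemma Q_eq_zero_of_forall {A B : Finset V} (h : ∀ u ∈ A, ∀ v ∈ B, M.P u v = 0) : M.Q A B = 0 :=
  sum_eq_zero fun u hu => sum_eq_zero fun v hv => by rw [h u hu v hv, mul_zero]

variable {M}

lemma graph_adj_of_P_pos {u v : V} (huv : u ≠ v) (h : 0 < M.P u v) : M.graph.Adj u v :=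
  ⟨huv, Or.inl h⟩

lemma reachable_of_P_pos {u v : V} (h : 0 < M.P u v) : M.graph.Reachable u v := by
  by_cases huv : u = v
  · exact huv ▸ SimpleGraph.Reachable.refl u
  · exact (graph_adj_of_P_pos huv h).reachable

lemma reachable_of_stepDist_pos {n : ℕ} {u v : V} (h : 0 < M.stepDist n u v) :
    M.graph.Reachable u v := by
  induction n generalizing v with
  | zero =>
    by_cases huv : u = v
    · exact huv ▸ SimpleGraph.Reachable.refl u
    · simp [stepDist, huv] at h
  | succ n ih =>
    obtain ⟨w, -, hw⟩ :=
      exists_lt_of_sum_lt (s := univ) (f := fun _ => (0 : ℝ)) (by simpa [stepDist] using h)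
    have hpos := (pos_and_pos_or_neg_and_neg_of_mul_pos hw).resolve_right
      fun hneg => (M.P_nonneg w v).not_gt hneg.2
    exact (ih hpos.1).trans (reachable_of_P_pos hpos.2)

lemma Irreducible.conn_univ (h : M.Irreducible) : M.Conn univ := by
  intro u _ v _
  obtain ⟨n, hn⟩ := h u v
  exact ⟨(reachable_of_stepDist_pos hn).some, by simp⟩

lemma conn_empty : M.Conn ∅ := by
  simp [Conn, ConnIn]

lemma near_self {α : ℝ} (hα : α ≤ 1) (v : V) : M.Near α v v := by
  have hhit : M.hitProbLE ⌊1 / α⌋₊ v v = 1 := by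
    cases ⌊1 / α⌋₊ <;> simp [hitProbLE]
  rw [Near, hhit, mul_one]
  exact mul_le_of_le_one_left (M.pi_pos v).le hα

@[simp]
lemma innerBoundary_empty : M.innerBoundary ∅ = ∅ := by
  simp [innerBoundary]

@[simp]
lemma innerBoundary_univ : M.innerBoundary univ = ∅ := by
  simp [innerBoundary]

lemma adjustment_empty {β : ℝ} (hβ : β ≤ 1) : M.Adjustment β ∅ ∅ := by
  intro S _ _
  simpa only [empty_union] using mul_le_of_le_one_left (M.Q_nonneg Sᶜ S) hβ

lemma adjustment_univ (β : ℝ) (C : Finset V) : M.Adjustment β C univ := by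
  intro S hS _
  rw [compl_univ, subset_empty] at hS
  simp [hS]

lemma P_eq_zero_of_closed {B K : Finset V}
    (hK : ∀ u ∈ K, ∀ v, M.graph.Adj u v → v ∉ B → v ∈ K) {u v : V} (hu : u ∈ K) (hv : v ∉ K)
    (hvB : v ∉ B) : M.P u v = 0 :=
  le_antisymm (not_lt.mp fun hpos =>
    hv (hK u hu v (graph_adj_of_P_pos (fun h => hv (h ▸ hu)) hpos) hvB)) (M.P_nonneg u v)

variable (M) in
def crawlerStep (C D : Finset V) : Finset V :=
  C ∪ Dᶜ.filter fun u => ∃ v ∈ C, 0 < M.P u v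

lemma mem_crawlerStep {C D : Finset V} {u : V} :
    u ∈ M.crawlerStep C D ↔ u ∈ C ∨ u ∉ D ∧ ∃ v ∈ C, 0 < M.P u v := by
  simp [crawlerStep]

lemma crawlerMove_crawlerStep {γ : ℝ} (hγ : 0 ≤ γ) {C D : Finset V} (hC : M.Conn C) :
    M.CrawlerMove γ C D (M.crawlerStep C D) := by
  refine ⟨subset_union_left, fun u hu => ?_, ?_, ?_⟩
  · rw [mem_sdiff, mem_crawlerStep] at hu
    exact mem_compl.mpr (hu.1.resolve_left hu.2).1
  · rw [Conn, crawlerStep, coe_union]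
    refine ConnIn.union hC fun x hx => ?_
    obtain ⟨hxD, v, hv, hxv⟩ : x ∉ D ∧ ∃ v ∈ C, 0 < M.P x v := by simpa using hx
    by_cases hx_eq : x = v
    · subst hx_eq
      exact ⟨x, hv, .nil, by simpa using Or.inl hv⟩
    · refine ⟨v, hv, .cons (graph_adj_of_P_pos hx_eq hxv) .nil, ?_⟩
      simpa using ⟨Or.inr ⟨hxD, v, hv, hxv⟩, Or.inl hv⟩
  · have hzero : M.Q (D ∪ M.crawlerStep C D)ᶜ C = 0 :=
      M.Q_eq_zero_of_forall fun u hu v hv => le_antisymm (not_lt.mp fun hpos => by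
        simp only [mem_compl, mem_union, mem_crawlerStep, not_or, not_and, not_exists] at hu
        exact hu.2.2 hu.1 v hv hpos) (M.P_nonneg u v)
    rw [hzero]
    exact mul_nonneg hγ (M.Q_nonneg _ _)

lemma NearSet.innerBoundary_compl_of_closed {α : ℝ} (hα : α ≤ 1) {C C' D K : Finset V}
    (hnear : M.NearSet α (M.innerBoundary D) C) (hCC' : C ⊆ C') (hKB : ∀ v ∈ K, v ∉ D ∪ C')
    (hK : ∀ u ∈ K, ∀ v, M.graph.Adj u v → v ∉ D ∪ C' → v ∈ K) :
    M.NearSet α (M.innerBoundary Kᶜ) C' := by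
  rintro v ⟨hvK, u, huK, huv⟩
  rw [mem_compl] at hvK
  rw [mem_compl, not_not] at huK
  by_cases hvC' : v ∈ C'
  · exact ⟨v, hvC', near_self hα v⟩
  have hvD : v ∈ D := by
    by_contra hvD
    exact huv.ne' (P_eq_zero_of_closed hK huK hvK (by simp [hvD, hvC']))
  obtain ⟨w, hw, hvw⟩ := hnear v ⟨hvD, u, fun huD => hKB u huK (mem_union_left _ huD), huv⟩
  exact ⟨w, hCC' hw, hvw⟩

lemma Conn.union_sdiff_of_closed {s : V} {A C' D K : Finset V} (hA : M.Conn A) (hC'A : C' ⊆ A)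
    (hD : M.Conn Dᶜ) (hsK : s ∈ K) (hKB : ∀ v ∈ K, v ∉ D ∪ C')
    (hK : ∀ u ∈ K, ∀ v, M.graph.Adj u v → v ∉ D ∪ C' → v ∈ K) :
    M.Conn (A ∪ Kᶜ \ (D ∪ C')) := by
  have hsD : s ∈ (Dᶜ : Finset V) := mem_compl.mpr fun h => hKB s hsK (mem_union_left _ h)
  have hexit := ConnIn.exists_walk_to_of_closed (E := (C' : Set V)) hD hsK hsD
    fun u hu v huv hvD hvC' => hK u hu v huv (by simp_all)
  rw [Conn, coe_union]
  refine ConnIn.union hA fun t ht => ?_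
  obtain ⟨c, hc, p, hp⟩ := hexit t (by simp only [coe_sdiff, coe_union, coe_compl] at ht; simp_all)
  refine ⟨c, hC'A hc, p, fun y hy => ?_⟩
  rcases hp y hy with hyC' | ⟨hyD, hyKC'⟩
  · exact Or.inl (hC'A hyC')
  · right
    simp_all

/-- Test `D` against `S₀ = (C' \ D) ∪ S ∪ T`, where `T = Kᶜ \ (D ∪ C')`: then `D ∪ S₀ = Kᶜ ∪ S`
and `C ∪ S₀ = C' ∪ S ∪ T`, and no probability flows from `K` into `T`. -/
lemma Adjustment.compl_of_closed {β : ℝ} {s : V} {C C' D K : Finset V}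
    (hadj : M.Adjustment β C D) (hD : M.Conn Dᶜ) (hCC' : C ⊆ C') (hC'D : C' \ C ⊆ Dᶜ)
    (hsK : s ∈ K) (hKB : ∀ v ∈ K, v ∉ D ∪ C')
    (hK : ∀ u ∈ K, ∀ v, M.graph.Adj u v → v ∉ D ∪ C' → v ∈ K) :
    M.Adjustment β C' Kᶜ := by
  intro S hSK hconn
  rw [compl_compl] at hSK
  set T := Kᶜ \ (D ∪ C')
  have hmem : ∀ v, (v ∈ K → v ∉ D ∧ v ∉ C') ∧ (v ∈ C → v ∈ C') ∧ (v ∈ C' → v ∉ C → v ∉ D) ∧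
      (v ∈ S → v ∈ K) := fun v =>
    ⟨fun h => by simpa using hKB v h, @hCC' v,
      fun h h' => mem_compl.mp (hC'D (mem_sdiff.mpr ⟨h, h'⟩)), @hSK v⟩
  have hS₀D : (C' \ D) ∪ S ∪ T ⊆ Dᶜ := by
    intro v
    have := hmem v
    simp only [T, mem_union, mem_sdiff, mem_compl] at this ⊢
    tauto
  have hCS₀ : C ∪ ((C' \ D) ∪ S ∪ T) = (C' ∪ S) ∪ T := by
    ext v
    have := hmem v
    simp only [T, mem_union, mem_sdiff, mem_compl] at this ⊢
    tauto
  have hDS₀ : D ∪ ((C' \ D) ∪ S ∪ T) = Kᶜ ∪ S := by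
    ext v
    have := hmem v
    simp only [T, mem_union, mem_sdiff, mem_compl] at this ⊢
    tauto
  have hconn₀ : M.Conn ((C' ∪ S) ∪ T) :=
    hconn.union_sdiff_of_closed subset_union_left hD hsK hKB hK
  have hT : M.Q (Kᶜ ∪ S)ᶜ T = 0 := M.Q_eq_zero_of_forall fun u hu v hv => by
    simp only [mem_compl, mem_union, not_or, not_not] at hu
    exact P_eq_zero_of_closed hK hu.1 (mem_compl.mp (mem_sdiff.mp hv).1) (mem_sdiff.mp hv).2
  have hdisj : Disjoint (C' ∪ S) T := by
    rw [disjoint_left]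
    intro v hv hvT
    have := hmem v
    simp only [T, mem_union, mem_sdiff, mem_compl] at this hv hvT
    tauto
  have key := hadj _ hS₀D (hCS₀ ▸ hconn₀)
  rwa [hDS₀, hCS₀, M.Q_union_right hdisj, hT, add_zero] at key

lemma dasherMove_univ {s : V} {α β : ℝ} {C D : Finset V} (hs : ∃ u ∈ C, M.Near α s u) :
    M.DasherMove s α β C D univ :=
  ⟨subset_univ _, by rw [compl_univ]; exact conn_empty, by simp [NearSet],
    adjustment_univ β C, fun _ => ⟨hs, rfl⟩⟩

lemma dasherMove_compl_componentIn {s : V} {α β : ℝ} (hα : α ≤ 1) {C C' D : Finset V}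
    (hD : M.Conn Dᶜ) (hnear : M.NearSet α (M.innerBoundary D) C) (hadj : M.Adjustment β C D)
    (hCC' : C ⊆ C') (hC'D : C' \ C ⊆ Dᶜ) (hs : s ∉ D ∪ C') :
    M.DasherMove s α β C' D (M.graph.componentIn (↑(D ∪ C'))ᶜ s)ᶜ := by
  set K := M.graph.componentIn (↑(D ∪ C'))ᶜ s
  have hsK : s ∈ K := SimpleGraph.mem_componentIn_self (by simpa using hs)
  have hKB : ∀ v ∈ K, v ∉ D ∪ C' := fun v hv => by
    simpa using SimpleGraph.mem_of_mem_componentIn hv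
  have hK : ∀ u ∈ K, ∀ v, M.graph.Adj u v → v ∉ D ∪ C' → v ∈ K := fun u hu v huv hv =>
    SimpleGraph.mem_componentIn_of_adj hu huv (by simpa using hv)
  refine ⟨fun v hv => mem_compl.mpr fun hvK => hKB v hvK hv, ?_,
    hnear.innerBoundary_compl_of_closed hα hCC' hKB hK,
    hadj.compl_of_closed hD hCC' hC'D hsK hKB hK, fun hsK' => absurd hsK (mem_compl.mp hsK')⟩
  rw [Conn, compl_compl]
  exact SimpleGraph.connIn_componentIn

variable (M) in
structure IsValidPosition (s : V) (α β : ℝ) (C D : Finset V) : Prop where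
  conn : M.Conn C
  conn_compl : M.Conn Dᶜ
  nearSet : M.NearSet α (M.innerBoundary D) C
  adjustment : M.Adjustment β C D
  eq_univ_of_mem : s ∈ D → D = univ

lemma isValidPosition_empty {s : V} {α β : ℝ} (hirr : M.Irreducible) (hβ : β ≤ 1) :
    M.IsValidPosition s α β ∅ ∅ where
  conn := conn_empty
  conn_compl := by rw [compl_empty]; exact hirr.conn_univ
  nearSet := by simp [NearSet]
  adjustment := adjustment_empty hβ
  eq_univ_of_mem h := absurd h (notMem_empty s)

lemma DasherMove.isValidPosition {s : V} {α β : ℝ} {C D D' : Finset V} (hC : M.Conn C)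
    (h : M.DasherMove s α β C D D') : M.IsValidPosition s α β C D' where
  conn := hC
  conn_compl := h.2.1
  nearSet := h.2.2.1
  adjustment := h.2.2.2.1
  eq_univ_of_mem hs := (h.2.2.2.2 hs).2

lemma ValidSeq.isValidPosition {s : V} {α β γ : ℝ} {k : ℕ} {C D : ℕ → Finset V}
    (h : M.ValidSeq s α β γ k C D) (hirr : M.Irreducible) (hβ : β ≤ 1) :
    M.IsValidPosition s α β (C k) (D k) := by
  obtain ⟨hC0, hD0, hmoves⟩ := h
  cases k with
  | zero => rw [hC0, hD0]; exact isValidPosition_empty hirr hβ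
  | succ k =>
    obtain ⟨hcrawl, hdash⟩ := hmoves k k.lt_succ_self
    exact hdash.isValidPosition hcrawl.2.2.1

lemma IsValidPosition.exists_dasherMove {s : V} {α β γ : ℝ} {C C' D : Finset V}
    (hpos : M.IsValidPosition s α β C D) (hα : α ≤ 1) (hD : D ≠ univ)
    (hmove : M.CrawlerMove γ C D C') : ∃ D', M.DasherMove s α β C' D D' := by
  by_cases hnear : ∃ u ∈ C', M.Near α s u
  · exact ⟨univ, dasherMove_univ hnear⟩
  have hs : s ∉ D ∪ C' := by
    rw [mem_union, not_or]
    exact ⟨fun hsD => hD (hpos.eq_univ_of_mem hsD), fun hsC' => hnear ⟨s, hsC', near_self hα s⟩⟩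
  exact ⟨_, dasherMove_compl_componentIn hα hpos.conn_compl hpos.nearSet hpos.adjustment
    hmove.1 hmove.2.1 hs⟩

end MarkovChain

theorem game_moves_exist_general {V : Type} [Fintype V] [DecidableEq V] (X : MarkovChain V)
    (hirr : X.Irreducible) (α β γ : ℝ)
    (hα : α ∈ Set.Ioc (0 : ℝ) 1) (hβ : β ∈ Set.Ioc (0 : ℝ) 1)
    (hγ : γ ∈ Set.Ioo (0 : ℝ) 1) (s : V) (k : ℕ) (C D : ℕ → Finset V)
    (hvalid : X.ValidSeq s α β γ k C D) (hDk : D k ≠ Finset.univ) :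
    (∃ C' : Finset V, X.CrawlerMove γ (C k) (D k) C') ∧
      ∀ C' : Finset V, X.CrawlerMove γ (C k) (D k) C' →
        ∃ D' : Finset V, X.DasherMove s α β C' (D k) D' := by
  have hpos := hvalid.isValidPosition hirr hβ.2
  exact ⟨⟨_, X.crawlerMove_crawlerStep hγ.1.le hpos.conn⟩,
    fun C' hC' => hpos.exists_dasherMove hα.2 hDk hC'⟩

/-- **Lemma 6.1.** In the bottleneck sequence game for a finite irreducible lazy
Markov chain, with `α, β ∈ (0,1]`, `γ ∈ (0,1)` and `s ∈ V`: if
`((C_i, D_i), 0 ≤ i ≤ k)` is an `(s,α,β,γ)`-valid sequence with `D_k ≠ V`, then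
Crawler has at least one `γ`-valid move from `(C_k, D_k)`, and from any position
`(C', D_k)` reached by such a move, Dasher has at least one `(s,α,β)`-valid
move. -/
theorem game_moves_exist {V : Type} [Fintype V] [DecidableEq V] (X : MarkovChain V)
    (hirr : X.Irreducible) (hlazy : X.Lazy) (α β γ : ℝ)
    (hα : α ∈ Set.Ioc (0 : ℝ) 1) (hβ : β ∈ Set.Ioc (0 : ℝ) 1)
    (hγ : γ ∈ Set.Ioo (0 : ℝ) 1) (s : V) (k : ℕ) (C D : ℕ → Finset V)
    (hvalid : X.ValidSeq s α β γ k C D) (hDk : D k ≠ Finset.univ) :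
    (∃ C' : Finset V, X.CrawlerMove γ (C k) (D k) C') ∧
      ∀ C' : Finset V, X.CrawlerMove γ (C k) (D k) C' →
        ∃ D' : Finset V, X.DasherMove s α β C' (D k) D' :=
  game_moves_exist_general X hirr α β γ hα hβ hγ s k C D hvalid hDk
end
end
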